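/- Suppose a : V×V → ℝ satisfies α₁|||v|||² ≤ a(v,v) for all v in a finite-dimensional normed space (V, |||·|||), b : V×Q → ℝ satisfies the inf-sup condition sup_{v≠0} b(v,q)/|||v||| ≥ β‖q‖ for all q ∈ Q, and the error pair (e,ξ) satisfies a(e,v) + b(v,ξ) = φ(v) for all v with |φ(v)| ≤ δ|||v|||, and a(e,e) + λ^{-1}‖ξ‖² = φ(e). Then |||e||| ≤ δ/α₁ and ‖ξ‖ ≤ β^{-1}(α₂ |||e||| + δ) ≤ β^{-1}(α₂/α₁ + 1)δ, where α₂ is the continuity constant of a. -/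
import Mathlib


/-- Abstract H¹ error estimate: from coercivity, continuity, an inf-sup condition,
and the error equations, `|||e||| ≤ δ/α₁` and
`‖ξ‖ ≤ β⁻¹(α₂ |||e||| + δ) ≤ β⁻¹(α₂/α₁ + 1) δ`. -/
theorem stmt17 {V Q : Type*}
    [NormedAddCommGroup V] [NormedSpace ℝ V] [FiniteDimensional ℝ V]
    [NormedAddCommGroup Q] [NormedSpace ℝ Q] [FiniteDimensional ℝ Q]
    (a : V → V → ℝ) (b : V → Q → ℝ) (φ : V → ℝ)
    (α₁ α₂ β δ lam : ℝ)
    (hα₁ : 0 < α₁) (hβ : 0 < β) (hδ : 0 ≤ δ) (hlam : 0 < lam)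
    (hcoer : ∀ v, α₁ * ‖v‖ ^ 2 ≤ a v v)
    (hcont : ∀ u v, |a u v| ≤ α₂ * ‖u‖ * ‖v‖)
    (hinfsup : ∀ q : Q, ∃ v : V, v ≠ 0 ∧ β * ‖q‖ * ‖v‖ ≤ b v q)
    (e : V) (ξ : Q)
    (herr : ∀ v, a e v + b v ξ = φ v)
    (hφ : ∀ v, |φ v| ≤ δ * ‖v‖)
    (heq : a e e + lam⁻¹ * ‖ξ‖ ^ 2 = φ e) :
    ‖e‖ ≤ δ / α₁ ∧
      ‖ξ‖ ≤ β⁻¹ * (α₂ * ‖e‖ + δ) ∧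
      β⁻¹ * (α₂ * ‖e‖ + δ) ≤ β⁻¹ * (α₂ / α₁ + 1) * δ := by
  -- α₂ ≥ 0, using a nonzero vector from the inf-sup condition
  obtain ⟨w, hw, -⟩ := hinfsup 0
  have hwpos : 0 < ‖w‖ := norm_pos_iff.mpr hw
  have hα₂ : 0 ≤ α₂ := by
    have := (abs_nonneg (a w w)).trans (hcont w w)
    nlinarith [mul_pos hwpos hwpos]
  -- e bound
  have he1 : α₁ * ‖e‖ ^ 2 ≤ δ * ‖e‖ := by
    have h1 := hcoer e
    have h2 := (le_abs_self (φ e)).trans (hφ e)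
    nlinarith [sq_nonneg ‖ξ‖, hlam.le, inv_nonneg.mpr hlam.le]
  have he : ‖e‖ ≤ δ / α₁ := by
    rcases eq_or_lt_of_le (norm_nonneg e) with h | h
    · rw [← h]; positivity
    · rw [le_div_iff₀ hα₁]; nlinarith
  refine ⟨he, ?_, ?_⟩
  · obtain ⟨v, hv, hbv⟩ := hinfsup ξ
    have hvpos : 0 < ‖v‖ := norm_pos_iff.mpr hv
    have h1 : b v ξ = φ v - a e v := by linarith [herr v]
    have h2 : b v ξ ≤ δ * ‖v‖ + α₂ * ‖e‖ * ‖v‖ := by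
      rw [h1]
      have := (le_abs_self (φ v)).trans (hφ v)
      have := (neg_abs_le (a e v)).trans (le_abs_self (a e v))
      have := (neg_le_of_abs_le (hcont e v))
      linarith
    have : β * ‖ξ‖ ≤ α₂ * ‖e‖ + δ := by
      have := hbv.trans h2
      nlinarith
    rw [inv_mul_eq_div, le_div_iff₀' hβ]
    linarith [this]
  · have : α₂ * ‖e‖ + δ ≤ (α₂ / α₁ + 1) * δ := by
      have : α₂ * ‖e‖ ≤ α₂ * (δ / α₁) := by
        exact mul_le_mul_of_nonneg_left he hα₂
      have h3 : α₂ * (δ / α₁) = α₂ / α₁ * δ := by ring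
      linarith [this, h3 ▸ this]
    rw [mul_assoc]
    exact mul_le_mul_of_nonneg_left this (inv_nonneg.mpr hβ.le)
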